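/- arXiv:2310.14611 — 9 statements merged into one kernel-verified Lean document; each statement's English description precedes it below -/
import Mathlib

section
/- For a pattern language L over an alphabet Σ containing a symbol a, the complement of Patt(a), namely the set of all words not containing the letter a, is not a pattern language and indeed not a generalized pattern language (a finite union of pattern languages, {ε}, and ∅). -/
variable {α : Type*}

/-- The full language `Σ*` of all words over the alphabet `α`. -/
def sigmaStar : Language α := Set.univ

/-- The pattern language `Σ*·a₁·Σ*·a₂·Σ*···Σ*·a_d·Σ*` determined by the symbols
`a₁, …, a_d`. -/
def pattLang : List α → Language α
  | [] => sigmaStar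
  | a :: as => sigmaStar * ({[a]} * pattLang as)
/-- A generalized pattern language is a finite union of languages, each of which is
`∅`, `{ε}`, or a pattern language. -/
def IsGenPatt (L : Language α) : Prop :=
  ∃ Ls : List (Language α),
    (∀ M ∈ Ls, M = ((∅ : Set (List α)) : Language α) ∨ M = ({[]} : Language α) ∨
      ∃ as : List α, M = pattLang as) ∧
    L = {w : List α | ∃ M ∈ Ls, w ∈ M}


lemma self_mem_pattLang (as : List α) : as ∈ pattLang as := by
  induction as with
  | nil => trivial
  | cons c cs ih =>
    show c :: cs ∈ sigmaStar * ({[c]} * pattLang cs)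
    exact ⟨[], trivial, [c] ++ cs, ⟨[c], rfl, cs, ih, rfl⟩, rfl⟩

lemma cons_mem_pattLang (a : α) (as : List α) : a :: as ∈ pattLang as := by
  cases as with
  | nil => trivial
  | cons c cs =>
    show a :: c :: cs ∈ sigmaStar * ({[c]} * pattLang cs)
    exact ⟨[a], trivial, [c] ++ cs, ⟨[c], rfl, cs, self_mem_pattLang cs, rfl⟩, rfl⟩

/-- The complement of `Patt(a)`, i.e. the set of all words not containing the letter `a`,
is not a pattern language, and is not even a generalized pattern language
(the alphabet contains a symbol other than `a`). -/
theorem compl_pattLang_not_genPatt (a : α) (hnt : ∃ b : α, b ≠ a) :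
    (¬ ∃ as : List α, ({w : List α | a ∉ w} : Language α) = pattLang as) ∧
    ¬ IsGenPatt ({w : List α | a ∉ w} : Language α) := by
  obtain ⟨b, hb⟩ := hnt
  have hgen : ¬ IsGenPatt ({w : List α | a ∉ w} : Language α) := by
    rintro ⟨Ls, hLs, hL⟩
    -- [b] is in L, so in some M ∈ Ls
    have hbmem : ([b] : List α) ∈ ({w : List α | a ∉ w} : Language α) := by
      simpa using fun h => hb h.symm
    rw [hL] at hbmem
    obtain ⟨M, hMLs, hbM⟩ := hbmem
    rcases hLs M hMLs with h | h | ⟨as, h⟩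
    · rw [h] at hbM; exact hbM
    · rw [h] at hbM; exact List.cons_ne_nil b [] hbM
    · -- M = pattLang as contains a :: as, which contains a
      have : (a :: as) ∈ ({w : List α | a ∉ w} : Language α) := by
        rw [hL]; exact ⟨M, hMLs, h ▸ cons_mem_pattLang a as⟩
      exact this (List.mem_cons_self (a := a) (l := as))
  refine ⟨?_, hgen⟩
  rintro ⟨as, h⟩
  exact hgen ⟨[pattLang as], fun M hM => by simp at hM; exact Or.inr (Or.inr ⟨as, hM⟩),
    by simp [h]; rfl⟩
end

section
/- For any generalized pattern language L, the Kleene star L* equals L ∪ {ε}; consequently generalized pattern languages are closed under Kleene star. -/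
open Computability

variable {α : Type*}

/-!
A generalized pattern language `L` satisfies `L * L ⊆ L`: a word of a pattern language stays in
it when anything is appended, `ε` is neutral, and `∅` contributes nothing. For a language closed
under concatenation, `1 + L` is already closed under right multiplication by `L`, so the star
adds nothing but `ε`; and adding `{ε}` as one more piece keeps `L` generalized pattern.
-/

theorem Language.kstar_eq_one_add_of_mul_self_le {l : Language α} (h : l * l ≤ l) :
    l∗ = 1 + l := by
  refine le_antisymm (kstar_le_of_mul_le_left le_self_add ?_)
    (add_le_iff.2 ⟨one_le_kstar, le_kstar⟩)
  calc (1 + l) * l = l + l * l := by rw [add_mul, one_mul]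
    _ ≤ 1 + l := add_le_iff.2 ⟨le_add_self, h.trans le_add_self⟩

theorem append_mem_pattLang {as x : List α} (hx : x ∈ pattLang as) (y : List α) :
    x ++ y ∈ pattLang as := by
  induction as generalizing x with
  | nil => trivial
  | cons a as ih =>
    obtain ⟨p, -, q, ⟨r, hr, s, hs, rfl⟩, rfl⟩ := hx
    exact ⟨p, trivial, r ++ (s ++ y), ⟨r, hr, s ++ y, ih hs, rfl⟩, by simp⟩

theorem IsGenPatt.mul_self_le {L : Language α} (hL : IsGenPatt L) : L * L ≤ L := by
  obtain ⟨Ls, hLs, rfl⟩ := hL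
  rintro _ ⟨x, ⟨M, hM, hxM⟩, y, hy, rfl⟩
  rcases hLs M hM with rfl | rfl | ⟨as, rfl⟩
  · exact hxM.elim
  · rw [(Language.mem_one x).1 hxM]
    exact hy
  · exact ⟨_, hM, append_mem_pattLang hxM y⟩

theorem IsGenPatt.one_add {L : Language α} (hL : IsGenPatt L) : IsGenPatt (1 + L) := by
  obtain ⟨Ls, hLs, hL⟩ := hL
  refine ⟨{[]} :: Ls, by simpa using hLs, Set.ext fun w => ?_⟩
  change w ∈ (1 + L : Language α) ↔ ∃ M ∈ ({[]} :: Ls : List (Language α)), w ∈ M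
  rw [Language.mem_add, Language.mem_one]
  simp only [List.mem_cons, exists_eq_or_imp]
  exact or_congr Iff.rfl (Set.ext_iff.1 hL w)

/-- For any generalized pattern language `L`, the Kleene star `L∗` equals `L ∪ {ε}`;
consequently generalized pattern languages are closed under Kleene star. -/
theorem genPatt_kstar (L : Language α) (hL : IsGenPatt L) :
    L∗ = ((L : Set (List α)) ∪ {([] : List α)} : Set (List α)) ∧ IsGenPatt (L∗) := by
  have hstar := Language.kstar_eq_one_add_of_mul_self_le hL.mul_self_le
  refine ⟨?_, hstar ▸ hL.one_add⟩
  rw [hstar, Language.add_def, Language.one_def]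
  exact Set.union_comm _ _
end

section
/- The intersection of two pattern languages Patt(a₁,...,a_d) and Patt(b₁,...,b_l) equals the (finite) union of pattern languages Patt(w) over all w in the set of shortest common superwords of a₁...a_d and b₁...b_l; in particular, the intersection of two pattern languages is a generalized pattern language, and the class of generalized pattern languages is closed under finite intersection. -/
/-!
A word lies in `Patt(a₁, …, a_d)` iff it contains `a₁ ⋯ a_d` as a subsequence, so a word lies in
both pattern languages iff it contains a common superword of the two patterns; shrinking that
superword as long as possible yields a shortest one. Every shortest common superword is a
sub-multiset of `as ++ bs` (each of its letters is used by one of the two embeddings), so there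
are finitely many, and the intersection is a finite union of pattern languages. Closure of
generalized pattern languages under intersection follows by distributing over the unions.
-/

variable {α : Type*}

/-- `scs u v` is the set of shortest common superwords of `u` and `v`: words `w` having both
`u` and `v` as subsequences, no strict subsequence of which has both as subsequences. -/
def scs (u v : List α) : Set (List α) :=
  {w | u.Sublist w ∧ v.Sublist w ∧
    ∀ w' : List α, w'.Sublist w → w' ≠ w → ¬ (u.Sublist w' ∧ v.Sublist w')}

open List

theorem mem_pattLang {as w : List α} : w ∈ pattLang as ↔ as <+ w := by
  induction as generalizing w with
  | nil => exact ⟨fun _ => nil_sublist w, fun _ => trivial⟩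
  | cons a as ih =>
    simp only [pattLang, Language.mem_mul, ih, cons_sublist_iff]
    constructor
    · rintro ⟨u, -, _, ⟨_, rfl, v, hv, rfl⟩, rfl⟩
      exact ⟨u ++ [a], v, by simp, by simp, hv⟩
    · rintro ⟨r₁, r₂, rfl, ha, hr₂⟩
      obtain ⟨s, t, rfl⟩ := mem_iff_append.1 ha
      refine ⟨s, trivial, a :: (t ++ r₂), ⟨[a], rfl, t ++ r₂, ?_, rfl⟩, by simp⟩
      exact hr₂.trans (sublist_append_right t r₂)

theorem exists_mem_scs_sublist {as bs : List α} (x : List α) (ha : as <+ x) (hb : bs <+ x) :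
    ∃ w ∈ scs as bs, w <+ x := by
  by_cases hx : x ∈ scs as bs
  · exact ⟨x, hx, Sublist.refl x⟩
  obtain ⟨x', hx', hne, ha', hb'⟩ : ∃ x', x' <+ x ∧ x' ≠ x ∧ as <+ x' ∧ bs <+ x' := by
    simpa [scs, ha, hb] using hx
  have : x'.length < x.length := hx'.length_le.lt_of_ne (mt hx'.eq_of_length hne)
  obtain ⟨w, hw, hwx'⟩ := exists_mem_scs_sublist x' ha' hb'
  exact ⟨w, hw, hwx'.trans hx'⟩
termination_by x.length

theorem pattLang_inter_eq_biUnion_scs (as bs : List α) :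
    ((pattLang as : Set (List α)) ∩ (pattLang bs : Set (List α)) : Set (List α)) =
      ⋃ w ∈ scs as bs, (pattLang w : Set (List α)) := by
  refine Set.ext fun x => ⟨fun ⟨ha, hb⟩ => ?_, fun hx => ?_⟩
  · obtain ⟨w, hw, hwx⟩ := exists_mem_scs_sublist x (mem_pattLang.1 ha) (mem_pattLang.1 hb)
    exact Set.mem_biUnion hw (mem_pattLang.2 hwx)
  · obtain ⟨w, ⟨has, hbs, -⟩, hwx⟩ := Set.mem_iUnion₂.1 hx
    exact ⟨mem_pattLang.2 (has.trans (mem_pattLang.1 hwx)),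
      mem_pattLang.2 (hbs.trans (mem_pattLang.1 hwx))⟩

theorem exists_sublist_subperm_append {as bs w : List α} (ha : as <+ w) (hb : bs <+ w) :
    ∃ w', w' <+ w ∧ as <+ w' ∧ bs <+ w' ∧ w' <+~ as ++ bs := by
  induction w generalizing as bs with
  | nil =>
    obtain rfl := sublist_nil.1 ha
    obtain rfl := sublist_nil.1 hb
    exact ⟨[], Sublist.slnil, Sublist.slnil, Sublist.slnil, Subperm.refl _⟩
  | cons c w ih =>
    rcases sublist_cons_iff.1 ha with has | ⟨as, rfl, has⟩ <;>
      rcases sublist_cons_iff.1 hb with hbs | ⟨bs, rfl, hbs⟩ <;>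
      obtain ⟨w', hw', ha', hb', hp⟩ := ih has hbs
    · exact ⟨w', hw'.cons c, ha', hb', hp⟩
    · refine ⟨c :: w', hw'.cons_cons c, ha'.cons c, hb'.cons_cons c, ?_⟩
      exact ((subperm_cons c).2 hp).trans perm_middle.symm.subperm
    · exact ⟨c :: w', hw'.cons_cons c, ha'.cons_cons c, hb'.cons c, (subperm_cons c).2 hp⟩
    · refine ⟨c :: w', hw'.cons_cons c, ha'.cons_cons c, hb'.cons_cons c, ?_⟩
      have : as ++ bs <+ as ++ c :: bs := (sublist_cons_self c bs).append_left as
      exact ((subperm_cons c).2 hp).trans (this.cons_cons c).subperm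

theorem subperm_append_of_mem_scs {as bs w : List α} (hw : w ∈ scs as bs) : w <+~ as ++ bs := by
  obtain ⟨has, hbs, hmin⟩ := hw
  obtain ⟨w', hw', ha', hb', hp⟩ := exists_sublist_subperm_append has hbs
  obtain rfl : w' = w := by_contra fun hne => hmin w' hw' hne ⟨ha', hb'⟩
  exact hp

theorem finite_setOf_subperm (l : List α) : {w | w <+~ l}.Finite :=
  (l.sublists.flatMap permutations).finite_toSet.subset fun _ ⟨t, hp, ht⟩ =>
    mem_flatMap.2 ⟨t, mem_sublists.2 ht, mem_permutations.2 hp.symm⟩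

theorem finite_scs (as bs : List α) : (scs as bs).Finite :=
  (finite_setOf_subperm (as ++ bs)).subset fun _ => subperm_append_of_mem_scs

def IsPattAtom (M : Language α) : Prop :=
  M = ((∅ : Set (List α)) : Language α) ∨ M = ({[]} : Language α) ∨
    ∃ as : List α, M = pattLang as

theorem isGenPatt_iff {S : Set (List α)} :
    IsGenPatt S ↔
      ∃ Ls : List (Language α), (∀ M ∈ Ls, IsPattAtom M) ∧ ∀ w, w ∈ S ↔ ∃ M ∈ Ls, w ∈ M :=
  ⟨fun ⟨Ls, hLs, e⟩ => ⟨Ls, hLs, fun w => by rw [e]; rfl⟩,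
    fun ⟨Ls, hLs, e⟩ => ⟨Ls, hLs, Set.ext e⟩⟩

theorem IsPattAtom.isGenPatt {M : Language α} (hM : IsPattAtom M) : IsGenPatt M :=
  isGenPatt_iff.2 ⟨[M], fun _ hN => mem_singleton.1 hN ▸ hM, fun _ =>
    ⟨fun h => ⟨M, mem_singleton_self M, h⟩, fun ⟨_, hN, h⟩ => mem_singleton.1 hN ▸ h⟩⟩

theorem isGenPatt_empty : IsGenPatt (∅ : Set (List α)) :=
  isGenPatt_iff.2 ⟨[], by simp, by simp⟩

theorem IsGenPatt.union {S T : Set (List α)} (hS : IsGenPatt S) (hT : IsGenPatt T) :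
    IsGenPatt (S ∪ T : Set (List α)) := by
  obtain ⟨Ls₁, hLs₁, e₁⟩ := isGenPatt_iff.1 hS
  obtain ⟨Ls₂, hLs₂, e₂⟩ := isGenPatt_iff.1 hT
  refine isGenPatt_iff.2 ⟨Ls₁ ++ Ls₂, fun M hM => (mem_append.1 hM).elim (hLs₁ M) (hLs₂ M),
    fun w => ?_⟩
  simp only [Set.mem_union, e₁, e₂, mem_append, or_and_right, exists_or]

theorem isGenPatt_biUnion_list {ι : Type*} (l : List ι) {S : ι → Set (List α)}
    (h : ∀ i ∈ l, IsGenPatt (S i)) :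
    IsGenPatt (⋃ i ∈ l, S i : Set (List α)) := by
  induction l with
  | nil => simpa using isGenPatt_empty
  | cons i l ih =>
    simp only [mem_cons, Set.iUnion_iUnion_eq_or_left]
    exact (h i mem_cons_self).union (ih fun j hj => h j (mem_cons_of_mem i hj))

theorem isGenPatt_biUnion_pattLang {S : Set (List α)} (hS : S.Finite) :
    IsGenPatt (⋃ w ∈ S, (pattLang w : Set (List α))) :=
  isGenPatt_iff.2 ⟨hS.toFinset.toList.map pattLang, by simp [IsPattAtom], fun _ =>
    Set.mem_iUnion₂.trans (by simp only [exists_prop, mem_map, Finset.mem_toList,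
      Set.Finite.mem_toFinset, exists_exists_and_eq_and]; rfl)⟩

theorem isGenPatt_pattLang_inter (as bs : List α) :
    IsGenPatt (((pattLang as : Set (List α)) ∩ (pattLang bs : Set (List α)) : Set (List α))) := by
  rw [pattLang_inter_eq_biUnion_scs]
  exact isGenPatt_biUnion_pattLang (finite_scs as bs)

theorem isGenPatt_singleton_nil_inter (S : Set (List α)) :
    IsGenPatt ({[]} ∩ S : Set (List α)) := by
  by_cases h : [] ∈ S
  · rw [Set.singleton_inter_of_mem h]
    exact IsPattAtom.isGenPatt (Or.inr (Or.inl rfl))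
  · rw [Set.singleton_inter_of_notMem h]
    exact isGenPatt_empty

theorem IsPattAtom.isGenPatt_inter {M N : Language α} (hM : IsPattAtom M) (hN : IsPattAtom N) :
    IsGenPatt ((M : Set (List α)) ∩ (N : Set (List α)) : Set (List α)) := by
  rcases hM with rfl | rfl | ⟨as, rfl⟩
  · exact (Set.empty_inter _).symm ▸ isGenPatt_empty
  · exact isGenPatt_singleton_nil_inter N
  rcases hN with rfl | rfl | ⟨bs, rfl⟩
  · exact (Set.inter_empty _).symm ▸ isGenPatt_empty
  · exact Set.inter_comm _ _ ▸ isGenPatt_singleton_nil_inter (pattLang as)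
  · exact isGenPatt_pattLang_inter as bs

theorem IsGenPatt.inter {S T : Set (List α)} (hS : IsGenPatt S) (hT : IsGenPatt T) :
    IsGenPatt (S ∩ T : Set (List α)) := by
  obtain ⟨Ls₁, hLs₁, e₁⟩ := isGenPatt_iff.1 hS
  obtain ⟨Ls₂, hLs₂, e₂⟩ := isGenPatt_iff.1 hT
  have : S ∩ T =
      ⋃ p ∈ Ls₁ ×ˢ Ls₂, ((p.1 : Set (List α)) ∩ (p.2 : Set (List α)) : Set (List α)) := by
    ext w
    simp only [Set.mem_inter_iff, e₁, e₂, Set.mem_iUnion, mem_product, exists_prop, Prod.exists]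
    exact ⟨fun ⟨⟨M, hM, hwM⟩, N, hN, hwN⟩ => ⟨M, N, ⟨hM, hN⟩, hwM, hwN⟩,
      fun ⟨M, N, ⟨hM, hN⟩, hwM, hwN⟩ => ⟨⟨M, hM, hwM⟩, N, hN, hwN⟩⟩
  rw [this]
  exact isGenPatt_biUnion_list _ fun p hp =>
    (hLs₁ _ (mem_product.1 hp).1).isGenPatt_inter (hLs₂ _ (mem_product.1 hp).2)

/-- The intersection of two pattern languages is the union of the pattern languages of the
shortest common superwords of the two symbol sequences; in particular this intersection is a
generalized pattern language, and generalized pattern languages are closed under (finite)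
intersection. -/
theorem pattLang_inter (as bs : List α) :
    (((pattLang as : Set (List α)) ∩ (pattLang bs : Set (List α)) : Set (List α))
        = (⋃ w ∈ scs as bs, (pattLang w : Set (List α)))) ∧
    IsGenPatt (((pattLang as : Set (List α)) ∩ (pattLang bs : Set (List α)) : Set (List α))) ∧
    (∀ L₁ L₂ : Language α, IsGenPatt L₁ → IsGenPatt L₂ →
      IsGenPatt (((L₁ : Set (List α)) ∩ (L₂ : Set (List α)) : Set (List α)))) :=
  ⟨pattLang_inter_eq_biUnion_scs as bs, isGenPatt_pattLang_inter as bs,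
    fun _ _ => IsGenPatt.inter⟩
end

section
/- (Local admissibility equals admissibility) Let σ be an execution over a concurrent alphabet (Σ, I) with dependence D = Σ×Σ\I, and let τ = ⟨e₁,...,e_m⟩ be a tuple of events of σ (in σ-order) whose labels are a permutation of a subsequence a_{j₁},...,a_{j_m} of the pattern symbols a₁,...,a_d. Let τ† = ⟨e_{i₁†},...,e_{i_m†}⟩ be the permutation of τ obtained by stably sorting according to the target label order. Then there exists an execution σ' ≡_I σ in which τ† appears as a subsequence if and only if for all indices r ≠ s with s < r, it is not the case that e_{i_r†} ≤_{D,σ} e_{i_s†}. -/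
variable {α : Type*}

/-- The trace partial order on the events (positions) of the execution `σ` induced by the
dependence relation `D = Σ×Σ \ I`: the reflexive-transitive closure of the relation ordering
`i` before `j` whenever `i` occurs before `j` in `σ` and their labels are dependent. -/
def tracePO (σ : List α) (I : α → α → Prop) : Fin σ.length → Fin σ.length → Prop :=
  Relation.ReflTransGen (fun i j => i < j ∧ ¬ I (σ.get i) (σ.get j))

lemma tracePO_le {σ : List α} {I : α → α → Prop} {i j : Fin σ.length}
    (h : tracePO σ I i j) : i ≤ j := by
  induction h with
  | refl => exact le_refl _
  | tail _ hstep ih => exact le_trans ih (le_of_lt hstep.1)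

lemma tracePO_trans {σ : List α} {I : α → α → Prop} {i j k : Fin σ.length}
    (h1 : tracePO σ I i j) (h2 : tracePO σ I j k) : tracePO σ I i k :=
  Relation.ReflTransGen.trans h1 h2

/-- Local admissibility equals admissibility. Let `es` be a tuple of events of `σ` listed in
`σ`-order whose labels form a permutation of a subsequence `js` of the pattern symbols `as`,
and let `est` be the permutation of `es` obtained by stably sorting according to the target
label order `js` (its labels are exactly `js`, and equally-labelled events keep their
`σ`-order). Then there is a linearization of the trace partial order (an execution
`σ' ≡_I σ`) containing `est` as a subsequence if and only if for all target positions
`s < r`, the event at position `r` is not below the event at position `s` in the trace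
partial order. -/
theorem admissible_iff_locally_admissible (σ : List α)
    (I : α → α → Prop) (hirr : ∀ a, ¬ I a a) (hsym : ∀ a b, I a b → I b a)
    (as : List α) (es est : List (Fin σ.length)) (js : List α)
    (hsorted : es.Pairwise (· < ·)) (hperm : est.Perm es)
    (hjs : js.Sublist as) (hlbl : est.map σ.get = js)
    (hstable : ∀ (p q : Fin est.length), p < q →
      σ.get (est.get p) = σ.get (est.get q) → est.get p < est.get q) :
    (∃ p : List (Fin σ.length), p.Perm (List.finRange σ.length) ∧
        (∀ i j : Fin σ.length, tracePO σ I i j → i ≠ j → p.idxOf i < p.idxOf j) ∧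
        est.Sublist p) ↔
      (∀ r s : Fin est.length, s < r → ¬ tracePO σ I (est.get r) (est.get s)) := by
  classical
  have hestnd : est.Nodup := hperm.nodup_iff.2 (hsorted.imp ne_of_lt)
  have hinj : Function.Injective est.get := List.nodup_iff_injective_get.1 hestnd
  constructor
  · rintro ⟨p, hpperm, hord, hsub⟩ r s hsr htr
    have hnd : p.Nodup := hpperm.nodup_iff.2 (List.nodup_finRange _)
    have hne : est.get r ≠ est.get s := fun h => absurd (hinj h) (ne_of_gt hsr)
    have h1 := hord _ _ htr hne
    have hpp : p.Pairwise (fun a b => p.idxOf a < p.idxOf b) := by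
      rw [List.pairwise_iff_get]
      intro i j hij
      rw [List.get_idxOf hnd, List.get_idxOf hnd]
      exact_mod_cast hij
    have h2 := List.pairwise_iff_get.1 (hpp.sublist hsub) s r hsr
    omega
  · intro hloc
    -- combined relation: strict trace order plus chain edges along est
    set S : Fin σ.length → Fin σ.length → Prop := fun i j =>
      (tracePO σ I i j ∧ i ≠ j) ∨
        ∃ u v : Fin est.length, u < v ∧ est.get u = i ∧ est.get v = j with hS
    -- invariant for the transitive closure
    have hSQ : ∀ i j, S i j →
        (tracePO σ I i j ∧ i < j) ∨
          ∃ u v : Fin est.length, u < v ∧ tracePO σ I i (est.get u) ∧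
            tracePO σ I (est.get v) j := by
      rintro i j (⟨ht, hne⟩ | ⟨u, v, huv, hu, hv⟩)
      · exact Or.inl ⟨ht, lt_of_le_of_ne (tracePO_le ht) hne⟩
      · exact Or.inr ⟨u, v, huv, hu ▸ Relation.ReflTransGen.refl,
          hv ▸ Relation.ReflTransGen.refl⟩
    have hQtrans : ∀ i j k,
        ((tracePO σ I i j ∧ i < j) ∨
          ∃ u v : Fin est.length, u < v ∧ tracePO σ I i (est.get u) ∧
            tracePO σ I (est.get v) j) →
        ((tracePO σ I j k ∧ j < k) ∨
          ∃ u v : Fin est.length, u < v ∧ tracePO σ I j (est.get u) ∧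
            tracePO σ I (est.get v) k) →
        ((tracePO σ I i k ∧ i < k) ∨
          ∃ u v : Fin est.length, u < v ∧ tracePO σ I i (est.get u) ∧
            tracePO σ I (est.get v) k) := by
      rintro i j k (⟨h1, hlt1⟩ | ⟨u, v, huv, hu, hv⟩) (⟨h2, hlt2⟩ | ⟨u', v', huv', hu', hv'⟩)
      · exact Or.inl ⟨tracePO_trans h1 h2, lt_trans hlt1 hlt2⟩
      · exact Or.inr ⟨u', v', huv', tracePO_trans h1 hu', hv'⟩
      · exact Or.inr ⟨u, v, huv, hu, tracePO_trans hv h2⟩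
      · -- middle: tracePO (est v) j and tracePO j (est u') so tracePO (est v) (est u')
        have hmid : tracePO σ I (est.get v) (est.get u') := tracePO_trans hv hu'
        have hvu : v ≤ u' := by
          by_contra h
          exact hloc v u' (lt_of_not_ge h) hmid
        exact Or.inr ⟨u, v', lt_of_lt_of_le huv (le_trans hvu (le_of_lt huv')), hu, hv'⟩
    have hQ : ∀ i j, Relation.TransGen S i j →
        (tracePO σ I i j ∧ i < j) ∨
          ∃ u v : Fin est.length, u < v ∧ tracePO σ I i (est.get u) ∧
            tracePO σ I (est.get v) j := by
      intro i j h
      induction h with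
      | single h => exact hSQ _ _ h
      | tail _ hstep ih => exact hQtrans _ _ _ ih (hSQ _ _ hstep)
    have hirrS : ∀ i, ¬ Relation.TransGen S i i := by
      intro i h
      rcases hQ i i h with ⟨_, hlt⟩ | ⟨u, v, huv, hu, hv⟩
      · exact lt_irrefl _ hlt
      · exact hloc v u huv (tracePO_trans hv hu)
    -- partial order, extended to a linear order
    set R : Fin σ.length → Fin σ.length → Prop := fun i j => i = j ∨ Relation.TransGen S i j
      with hR
    haveI : IsPartialOrder (Fin σ.length) R :=
      { refl := fun a => Or.inl rfl
        trans := by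
          rintro a b c (rfl | h1) (rfl | h2)
          · exact Or.inl rfl
          · exact Or.inr h2
          · exact Or.inr h1
          · exact Or.inr (h1.trans h2)
        antisymm := by
          rintro a b (rfl | h1) (h2 | h2)
          · rfl
          · rfl
          · exact h2.symm
          · exact absurd (h1.trans h2) (hirrS a) }
    obtain ⟨L, hL, hRL⟩ := extend_partialOrder R
    haveI := hL
    set p : List (Fin σ.length) :=
      (List.finRange σ.length).mergeSort (fun a b => decide (L a b)) with hp
    have hpperm : p.Perm (List.finRange σ.length) := List.mergeSort_perm _ _
    have hnd : p.Nodup := hpperm.nodup_iff.2 (List.nodup_finRange _)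
    have hsortp : p.Pairwise L := by
      have := List.pairwise_mergeSort (le := fun a b => decide (L a b))
        (fun a b c h1 h2 => by
          simp only [decide_eq_true_eq] at *
          exact _root_.trans h1 h2)
        (fun a b => by
          simp only [Bool.or_eq_true, decide_eq_true_eq]
          exact Std.Total.total a b)
        (List.finRange σ.length)
      exact this.imp (fun h => of_decide_eq_true h)
    have hmemp : ∀ a : Fin σ.length, a ∈ p := fun a =>
      hpperm.mem_iff.2 (List.mem_finRange a)
    have hidx : ∀ a b : Fin σ.length, L a b → a ≠ b → p.idxOf a < p.idxOf b := by
      intro a b hab hne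
      have ha : p.idxOf a < p.length := List.idxOf_lt_length_iff.2 (hmemp a)
      have hb : p.idxOf b < p.length := List.idxOf_lt_length_iff.2 (hmemp b)
      by_contra h
      rcases lt_or_eq_of_le (le_of_not_gt h) with hlt | heq
      · have := List.pairwise_iff_get.1 hsortp ⟨_, hb⟩ ⟨_, ha⟩ hlt
        rw [List.idxOf_get, List.idxOf_get] at this
        exact hne (Std.Antisymm.antisymm _ _ hab this)
      · apply hne
        have := congrArg (fun k => p.get ⟨k % p.length, Nat.mod_lt _ (lt_of_le_of_lt (Nat.zero_le _) ha)⟩) heq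
        have ha' : p.get ⟨p.idxOf a, ha⟩ = a := List.idxOf_get ha
        have hb' : p.get ⟨p.idxOf b, hb⟩ = b := List.idxOf_get hb
        rw [← ha', ← hb']
        congr 1
        exact Fin.ext (by simpa using heq.symm)
    refine ⟨p, hpperm, ?_, ?_⟩
    · intro i j ht hne
      exact hidx i j (hRL i j (Or.inr (Relation.TransGen.single (Or.inl ⟨ht, hne⟩)))) hne
    · -- est is a sublist of p
      set Ls : Fin σ.length → Fin σ.length → Prop := fun a b => L a b ∧ a ≠ b with hLs
      haveI : IsAntisymm (Fin σ.length) Ls :=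
        ⟨fun a b h1 h2 => Std.Antisymm.antisymm _ _ h1.1 h2.1⟩
      set q : List (Fin σ.length) := p.filter (· ∈ est) with hq
      have hqsub : q.Sublist p := List.filter_sublist (l := p)
      have hqnd : q.Nodup := hnd.filter _
      have hqperm : est.Perm q := by
        rw [List.perm_ext_iff_of_nodup hestnd hqnd]
        intro a
        simp [hq, hmemp a]
      have hestsorted : est.Pairwise Ls := by
        rw [List.pairwise_iff_get]
        intro u v huv
        refine ⟨hRL _ _ (Or.inr (Relation.TransGen.single
          (Or.inr ⟨u, v, huv, rfl, rfl⟩))), ?_⟩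
        intro h
        exact absurd (hinj h) (ne_of_lt huv)
      have hpsorted : p.Pairwise Ls := hsortp.and hnd
      have hqsorted : q.Pairwise Ls := hpsorted.sublist hqsub
      have : est = q := List.Perm.eq_of_pairwise' hestsorted hqsorted hqperm
      rw [this]
      exact hqsub
end

section
/- (After-set incremental update) Let σ be an execution over a concurrent alphabet (Σ, I) with dependence D, let ρ and ρ·f be prefixes of σ, and let e be an event in ρ. Define After(ρ, e) = {lbl(g) : g an event of ρ with e ≤_{D,σ} g}. Then After(ρ·f, e) = After(ρ, e) ∪ {lbl(f)} if there exists a ∈ After(ρ, e) with (a, lbl(f)) ∈ D, and After(ρ·f, e) = After(ρ, e) otherwise. -/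
variable {α : Type*}

/-- The after set of the event `e` in the length-`k` prefix `ρ` of `σ`: the labels of the
events of `ρ` that are above `e` in the trace partial order. -/
def After (σ : List α) (I : α → α → Prop) (k : ℕ) (e : Fin σ.length) : Set α :=
  {x | ∃ g : Fin σ.length, (g : ℕ) < k ∧ tracePO σ I e g ∧ σ.get g = x}

/-- After-set incremental update: if `ρ` (of length `k`) and `ρ·f` are prefixes of `σ` and `e`
is an event of `ρ`, then `After(ρ·f, e)` equals `After(ρ, e) ∪ {lbl f}` if some label in
`After(ρ, e)` is dependent with `lbl f`, and equals `After(ρ, e)` otherwise. -/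
theorem after_incremental (σ : List α)
    (I : α → α → Prop) (hirr : ∀ a, ¬ I a a) (hsym : ∀ a b, I a b → I b a)
    (k : ℕ) (hk : k + 1 ≤ σ.length) (f : Fin σ.length) (hf : (f : ℕ) = k)
    (e : Fin σ.length) (he : (e : ℕ) < k) :
    ((∃ a ∈ After σ I k e, ¬ I a (σ.get f)) →
      After σ I (k + 1) e = After σ I k e ∪ {σ.get f}) ∧
    ((¬ ∃ a ∈ After σ I k e, ¬ I a (σ.get f)) →
      After σ I (k + 1) e = After σ I k e) := by
  constructor
  · rintro ⟨a, ⟨g, hg, hge, rfl⟩, hdep⟩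
    have hgf : g < f := by simp [Fin.lt_def, hf]; omega
    have hef : tracePO σ I e f := hge.tail ⟨hgf, hdep⟩
    ext x
    constructor
    · rintro ⟨g', hg', hge', rfl⟩
      rcases Nat.lt_or_ge (g' : ℕ) k with h | h
      · exact Or.inl ⟨g', h, hge', rfl⟩
      · have : g' = f := Fin.ext (by omega)
        subst this
        exact Or.inr rfl
    · rintro (⟨g', hg', hge', rfl⟩ | hx)
      · exact ⟨g', by omega, hge', rfl⟩
      · exact ⟨f, by omega, hef, hx.symm⟩
  · intro hno
    ext x
    constructor
    · rintro ⟨g, hg, hge, rfl⟩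
      refine ⟨g, ?_, hge, rfl⟩
      by_contra h
      have hgf : g = f := Fin.ext (by omega)
      subst hgf
      cases hge with
      | refl => omega
      | tail hchain hstep =>
        rename_i b
        have hbk : (b : ℕ) < k := by
          have h2 : (b : ℕ) < (g : ℕ) := hstep.1
          omega
        exact hno ⟨σ.get b, ⟨b, hbk, hchain, rfl⟩, hstep.2⟩
    · rintro ⟨g, hg, hge, rfl⟩
      exact ⟨g, by omega, hge, rfl⟩
end

section
/- (After sets decide causality) Let σ be an execution and ρ a prefix of σ ending at event f, and let e be an event occurring strictly before f in ρ. Then lbl(f) ∈ After(ρ, e) if and only if e ≤_{D,σ} f. -/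
variable {α : Type*}

/-- After sets decide causality: if `ρ` is the prefix of `σ` ending at the event `f` and `e`
occurs strictly before `f`, then `lbl f ∈ After(ρ, e)` if and only if `e ≤_{D,σ} f`. -/
theorem after_decides_causality (σ : List α)
    (I : α → α → Prop) (hirr : ∀ a, ¬ I a a) (hsym : ∀ a b, I a b → I b a)
    (f e : Fin σ.length) (he : e < f) :
    σ.get f ∈ After σ I ((f : ℕ) + 1) e ↔ tracePO σ I e f := by
  constructor
  · rintro ⟨g, hgk, hpo, hlbl⟩
    rcases lt_or_eq_of_le (Nat.lt_succ_iff.mp hgk) with h | h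
    · exact hpo.tail ⟨h, by rw [hlbl]; exact hirr _⟩
    · have : g = f := Fin.ext h
      exact this ▸ hpo
  · intro h
    exact ⟨f, Nat.lt_succ_self _, h, rfl⟩
end

section
/- (Closure of partially admissible tuples under join) Fix an execution σ, a prefix ρ of σ, and a label sequence b₁,...,b_m that is a permutation of a subsequence of the pattern a₁,...,a_d. For two tuples τ₁ = ⟨e₁¹,...,e_m¹⟩ and τ₂ = ⟨e₁²,...,e_m²⟩ of events of ρ with the same label sequence b₁,...,b_m, define their join τ₁∇τ₂ = ⟨e₁,...,e_m⟩ where e_i is the later (in σ-order) of e_i¹ and e_i². If τ₁ and τ₂ are both partially (locally) admissible with respect to the pattern, then τ₁∇τ₂ is also partially admissible. -/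
variable {α : Type*}

/-- Partial (local) admissibility of a tuple `τ` of events with respect to the stable-sort
permutation `π` (mapping target positions to source positions): for any two target positions
`s < r`, the event at target position `r` must not be below the event at target position `s`
in the trace partial order. -/
def Adm (σ : List α) (I : α → α → Prop) {m : ℕ} (π : Equiv.Perm (Fin m))
    (τ : Fin m → Fin σ.length) : Prop :=
  ∀ r s : Fin m, s < r → ¬ tracePO σ I (τ (π r)) (τ (π s))

/-- `AdSet σ I b π k` is the set of partially admissible tuples over the length-`k` prefix of
`σ` with label sequence `b`: tuples of events of the prefix, listed in `σ`-order, whose labels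
are `b₁, …, b_m`, satisfying the local admissibility condition w.r.t. the stable-sort
permutation `π`. -/
def AdSet (σ : List α) (I : α → α → Prop) {m : ℕ} (b : Fin m → α)
    (π : Equiv.Perm (Fin m)) (k : ℕ) : Set (Fin m → Fin σ.length) :=
  {τ | (∀ i, (τ i : ℕ) < k) ∧ StrictMono τ ∧ (∀ i, σ.get (τ i) = b i) ∧ Adm σ I π τ}

lemma tracePO_of_le {σ : List α} {I : α → α → Prop} (hirr : ∀ a, ¬ I a a)
    {p q r : Fin σ.length} (hpq : p ≤ q) (hlab : σ.get p = σ.get q)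
    (h : tracePO σ I q r) : tracePO σ I p r := by
  rcases eq_or_lt_of_le hpq with h' | h'
  · rwa [h']
  · exact Relation.ReflTransGen.head ⟨h', by rw [hlab]; exact hirr _⟩ h

/-- Closure of partially admissible tuples under join: if `τ₁` and `τ₂` are partially
admissible tuples of events of the length-`k` prefix of `σ` with the same label sequence `b`
(a permutation, via the stable-sort permutation `π`, of a subsequence `js` of the pattern
`as`), then their componentwise join (taking the later event at each position) is also
partially admissible. -/
theorem adm_closed_under_join (σ : List α)
    (I : α → α → Prop) (hirr : ∀ a, ¬ I a a) (hsym : ∀ a b, I a b → I b a)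
    (as : List α) {m : ℕ} (b js : Fin m → α) (hjs : (List.ofFn js).Sublist as)
    (π : Equiv.Perm (Fin m)) (hπ : ∀ r, b (π r) = js r)
    (hstable : ∀ r s : Fin m, r < s → js r = js s → π r < π s)
    (k : ℕ) (τ₁ τ₂ : Fin m → Fin σ.length)
    (h₁ : τ₁ ∈ AdSet σ I b π k) (h₂ : τ₂ ∈ AdSet σ I b π k) :
    (fun i => max (τ₁ i) (τ₂ i)) ∈ AdSet σ I b π k := by
  obtain ⟨hb₁, hm₁, hl₁, ha₁⟩ := h₁
  obtain ⟨hb₂, hm₂, hl₂, ha₂⟩ := h₂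
  have hlmax : ∀ i, σ.get (max (τ₁ i) (τ₂ i)) = b i := by
    intro i
    rcases max_choice (τ₁ i) (τ₂ i) with h | h <;> rw [h]
    · exact hl₁ i
    · exact hl₂ i
  refine ⟨?_, fun a c hac => max_lt_max (hm₁ hac) (hm₂ hac), hlmax, ?_⟩
  · intro i
    show (↑(max (τ₁ i) (τ₂ i)) : ℕ) < k
    rcases max_choice (τ₁ i) (τ₂ i) with h | h <;> rw [h]
    · exact hb₁ i
    · exact hb₂ i
  · intro r s hrs htr
    simp only at htr
    rcases le_total (τ₁ (π s)) (τ₂ (π s)) with h | h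
    · rw [max_eq_right h] at htr
      exact ha₂ r s hrs (tracePO_of_le hirr (le_max_right _ _)
        (by rw [hl₂ (π r), hlmax (π r)]) htr)
    · rw [max_eq_left h] at htr
      exact ha₁ r s hrs (tracePO_of_le hirr (le_max_left _ _)
        (by rw [hl₁ (π r), hlmax (π r)]) htr)
end

section
/- (Existence and uniqueness of maximum admissible tuple) Fix an execution σ, a prefix ρ, and a label sequence b₁,...,b_m that is a permutation of a subsequence of the pattern a₁,...,a_d. Order same-label tuples pointwise by σ-position: τ₁ ⊴ τ₂ iff every component of τ₁ occurs at or before the corresponding component of τ₂. If the set Ad(ρ, ⟨b₁,...,b_m⟩) of partially admissible tuples with label sequence b₁,...,b_m is nonempty, then it has a unique maximum element with respect to ⊴. -/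
variable {α : Type*}

private lemma adm_aux {σ : List α} {I : α → α → Prop} (hirr : ∀ a, ¬ I a a)
    {m : ℕ} {π : Equiv.Perm (Fin m)} {b : Fin m → α} {τ₁ τ₂ : Fin m → Fin σ.length}
    (h₁ : Adm σ I π τ₁) (hl₁ : ∀ i, σ.get (τ₁ i) = b i) (hl₂ : ∀ i, σ.get (τ₂ i) = b i)
    {r s : Fin m} (hs : s < r) (hss : τ₂ (π s) ≤ τ₁ (π s)) :
    ¬ tracePO σ I (max (τ₁ (π r)) (τ₂ (π r))) (max (τ₁ (π s)) (τ₂ (π s))) := by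
  rw [max_eq_left hss]
  intro h
  apply h₁ r s hs
  refine Relation.ReflTransGen.trans ?_ h
  rcases (le_max_left (τ₁ (π r)) (τ₂ (π r))).lt_or_eq with hlt | heq
  · refine Relation.ReflTransGen.single ⟨hlt, ?_⟩
    have hmax : σ.get (max (τ₁ (π r)) (τ₂ (π r))) = b (π r) := by
      rcases max_cases (τ₁ (π r)) (τ₂ (π r)) with ⟨h', _⟩ | ⟨h', _⟩ <;> rw [h']
      exacts [hl₁ _, hl₂ _]
    rw [hmax, hl₁]
    exact hirr _
  · rw [← heq]

private lemma adm_join {σ : List α} {I : α → α → Prop} (hirr : ∀ a, ¬ I a a)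
    {m : ℕ} {b : Fin m → α} {π : Equiv.Perm (Fin m)} {k : ℕ}
    {τ₁ τ₂ : Fin m → Fin σ.length} (h₁ : τ₁ ∈ AdSet σ I b π k) (h₂ : τ₂ ∈ AdSet σ I b π k) :
    (fun i => max (τ₁ i) (τ₂ i)) ∈ AdSet σ I b π k := by
  obtain ⟨hk₁, hm₁, hl₁, ha₁⟩ := h₁
  obtain ⟨hk₂, hm₂, hl₂, ha₂⟩ := h₂
  refine ⟨?_, ?_, ?_, ?_⟩
  · intro i
    rcases max_cases (τ₁ i) (τ₂ i) with ⟨h', _⟩ | ⟨h', _⟩ <;> simp only [h']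
    exacts [hk₁ i, hk₂ i]
  · intro i j hij
    exact max_lt_iff.2 ⟨lt_of_lt_of_le (hm₁ hij) (le_max_left _ _),
      lt_of_lt_of_le (hm₂ hij) (le_max_right _ _)⟩
  · intro i
    rcases max_cases (τ₁ i) (τ₂ i) with ⟨h', _⟩ | ⟨h', _⟩ <;> simp only [h']
    exacts [hl₁ i, hl₂ i]
  · intro r s hs
    rcases le_total (τ₂ (π s)) (τ₁ (π s)) with hle | hle
    · exact adm_aux hirr ha₁ hl₁ hl₂ hs hle
    · have := adm_aux hirr ha₂ hl₂ hl₁ hs hle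
      simpa [max_comm] using this

/-- Existence and uniqueness of the maximum partially admissible tuple: if the set of
partially admissible tuples over the length-`k` prefix of `σ` with label sequence `b` (a
permutation, via the stable-sort permutation `π`, of a subsequence `js` of the pattern `as`)
is nonempty, then it has a unique greatest element with respect to the pointwise order `⊴`
(componentwise comparison of positions in `σ`). -/
theorem adm_unique_max (σ : List α)
    (I : α → α → Prop) (hirr : ∀ a, ¬ I a a) (hsym : ∀ a b, I a b → I b a)
    (as : List α) {m : ℕ} (b js : Fin m → α) (hjs : (List.ofFn js).Sublist as)
    (π : Equiv.Perm (Fin m)) (hπ : ∀ r, b (π r) = js r)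
    (hstable : ∀ r s : Fin m, r < s → js r = js s → π r < π s)
    (k : ℕ) (hne : (AdSet σ I b π k).Nonempty) :
    ∃! τ₀ : Fin m → Fin σ.length, IsGreatest (AdSet σ I b π k) τ₀ := by
  obtain ⟨τ₀, hτ₀, hmaxi⟩ :=
    Set.Finite.exists_maximalFor id _ (Set.toFinite (AdSet σ I b π k)) hne
  have hgr : IsGreatest (AdSet σ I b π k) τ₀ := by
    refine ⟨hτ₀, fun τ hτ => ?_⟩
    have hj := adm_join hirr hτ₀ hτ
    have hle : τ₀ ≤ (fun i => max (τ₀ i) (τ i)) := fun i => le_max_left _ _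
    have heq : id τ₀ = id (fun i => max (τ₀ i) (τ i)) := le_antisymm hle (hmaxi hj hle)
    intro i
    calc τ i ≤ max (τ₀ i) (τ i) := le_max_right _ _
      _ = τ₀ i := by simp only [id] at heq; exact (congrFun heq i).symm
  exact ⟨τ₀, hgr, fun y hy => hy.unique hgr⟩
end

section
/- (Vector timestamp characterizes the trace partial order) Let σ be an execution over concurrent alphabet (Σ, I) with threads T, and assign to each event e the vector timestamp VC_e : T → ℕ with VC_e(t) = |{f : f ≤_{D,σ} e and f is an event of thread t}|. Then for any two events e, f of σ: VC_e ⊑ VC_f (pointwise ≤) if and only if e ≤_{D,σ} f. -/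
variable {α : Type*}

/-- Vector timestamps characterize the trace partial order. Each label carries a thread
(given by `th`), and labels of the same thread are dependent. Assign to each event `e` the
vector timestamp `VC_e : T → ℕ` counting, for each thread `t`, the events of thread `t` that
are below `e` in the trace partial order. Then `VC_e ⊑ VC_f` (pointwise `≤`) if and only if
`e ≤_{D,σ} f`. -/
theorem vector_clock_characterizes_tracePO (σ : List α)
    (I : α → α → Prop) (hirr : ∀ a, ¬ I a a) (hsym : ∀ a b, I a b → I b a)
    (T : Type*) (th : α → T) (hth : ∀ a b : α, th a = th b → ¬ I a b)
    (e f : Fin σ.length) :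
    (∀ t : T,
        {g : Fin σ.length | tracePO σ I g e ∧ th (σ.get g) = t}.ncard ≤
          {g : Fin σ.length | tracePO σ I g f ∧ th (σ.get g) = t}.ncard) ↔
      tracePO σ I e f := by
  have mono : ∀ g : Fin σ.length, tracePO σ I g e → g ≤ e := by
    intro g h
    induction h with
    | refl => exact le_refl _
    | tail _ step ih => exact le_trans ih (le_of_lt step.1)
  constructor
  · intro h
    set t := th (σ.get e) with ht
    have hle := h t
    set Se := {g : Fin σ.length | tracePO σ I g e ∧ th (σ.get g) = t} with hSe
    set Sf := {g : Fin σ.length | tracePO σ I g f ∧ th (σ.get g) = t} with hSf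
    have hexists : ∃ g ∈ Sf, e ≤ g := by
      by_contra hc
      push_neg at hc
      have hsub : Sf ⊂ Se := by
        constructor
        · intro g hg
          have hlt : g < e := hc g hg
          refine ⟨Relation.ReflTransGen.single ⟨hlt, hth _ _ ?_⟩, hg.2⟩
          rw [hg.2]
        · intro hsub2
          have heSe : e ∈ Se := ⟨Relation.ReflTransGen.refl, rfl⟩
          have := hc e (hsub2 heSe)
          exact absurd (le_refl e) (not_le_of_gt this)
      have := Set.ncard_lt_ncard hsub (Set.toFinite Se)
      omega
    obtain ⟨g, hg, hge⟩ := hexists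
    rcases eq_or_lt_of_le hge with heq | hlt
    · exact heq ▸ hg.1
    · exact Relation.ReflTransGen.trans
        (Relation.ReflTransGen.single ⟨hlt, hth _ _ hg.2.symm⟩) hg.1
  · intro hef t
    apply Set.ncard_le_ncard _ (Set.toFinite _)
    intro g hg
    exact ⟨Relation.ReflTransGen.trans hg.1 hef, hg.2⟩
end
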